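/- arXiv:1503.06389 — 5 statements merged into one kernel-verified Lean document; each statement's English description precedes it below -/
import Mathlib

section
/- Let h : ℝ₊ → ℝ ∪ {+∞} be convex, lower semicontinuous and superlinear at +∞. Then there exists an increasing sequence hₙ of convex l.s.c. functions, each finite in a neighborhood of 0 with finite right derivative at 0 and superlinear at +∞, such that h(x) = lim_{n→∞} hₙ(x) for every x ∈ ℝ₊. -/
/-!
Take `hₙ = max gₙ φ`. Here `gₙ x = inf_y (h y + n |x - y|)` is the Pasch–Hausdorff envelope of
`h`: it is convex, `n`-Lipschitz, increasing in `n`, bounded by `h`, and tends to `h` because `h`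
is lower semicontinuous and bounded below. The function `φ = sup_k (k x - C k)` is a fixed convex
minorant of `h` that is finite everywhere and superlinear; superlinearity of `h` is what makes
such constants `C k` exist. Being finite and convex on all of `ℝ`, each `hₙ` has a finite right
derivative at `0`.
-/

open Filter Topology Set

noncomputable section

/-- The Pasch–Hausdorff envelope of `f` restricted to `D`: the largest `K`-Lipschitz function
below `f` on `D`. It is junk unless `D` is nonempty and `f` is bounded below on `D`. -/
def lipschitzEnvelope {X : Type*} [PseudoMetricSpace X] (D : Set X) (f : X → ℝ) (K : ℝ)
    (x : X) : ℝ :=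
  ⨅ y : D, f y + K * dist x y

section LipschitzEnvelope

variable {X : Type*} [PseudoMetricSpace X] {D : Set X} {f : X → ℝ} {m K : ℝ} {x : X}

lemma lipschitzEnvelope_le (hm : ∀ y ∈ D, m ≤ f y) (hK : 0 ≤ K) {y : X} (hy : y ∈ D) :
    lipschitzEnvelope D f K x ≤ f y + K * dist x y := by
  refine ciInf_le ⟨m, ?_⟩ (⟨y, hy⟩ : D)
  rintro _ ⟨z, rfl⟩
  exact le_add_of_le_of_nonneg (hm z z.2) (mul_nonneg hK dist_nonneg)

lemma le_lipschitzEnvelope (hD : D.Nonempty) {c : ℝ} (h : ∀ y ∈ D, c ≤ f y + K * dist x y) :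
    c ≤ lipschitzEnvelope D f K x :=
  have := hD.to_subtype
  le_ciInf fun y => h y y.2

lemma lipschitzEnvelope_le_self (hm : ∀ y ∈ D, m ≤ f y) (hK : 0 ≤ K) (hx : x ∈ D) :
    lipschitzEnvelope D f K x ≤ f x := by
  simpa using lipschitzEnvelope_le hm hK (x := x) hx

lemma lipschitzEnvelope_mono (hD : D.Nonempty) (hm : ∀ y ∈ D, m ≤ f y) (hK : 0 ≤ K) {K' : ℝ}
    (hKK' : K ≤ K') : lipschitzEnvelope D f K x ≤ lipschitzEnvelope D f K' x :=
  le_lipschitzEnvelope hD fun _ hy =>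
    (lipschitzEnvelope_le hm hK hy).trans (by gcongr)

lemma lipschitzWith_lipschitzEnvelope (hD : D.Nonempty) (hm : ∀ y ∈ D, m ≤ f y) (hK : 0 ≤ K) :
    LipschitzWith K.toNNReal (lipschitzEnvelope D f K) := by
  refine LipschitzWith.of_le_add_mul' K fun x x' => ?_
  suffices lipschitzEnvelope D f K x - K * dist x x' ≤ lipschitzEnvelope D f K x' by linarith
  refine le_lipschitzEnvelope hD fun y hy => ?_
  have := mul_le_mul_of_nonneg_left (dist_triangle x x' y) hK
  linarith [lipschitzEnvelope_le hm hK (x := x) hy]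

/-- Points of `D` far from `x` are penalized by `K * dist`, while `f ≥ m` on them. -/
lemma eventually_le_lipschitzEnvelope (hD : D.Nonempty) (hm : ∀ y ∈ D, m ≤ f y) {M : ℝ}
    (hM : ∀ᶠ y in 𝓝 x, y ∈ D → M ≤ f y) : ∀ᶠ K in atTop, M ≤ lipschitzEnvelope D f K x := by
  obtain ⟨δ, hδ, hball⟩ := Metric.eventually_nhds_iff.1 hM
  filter_upwards [eventually_ge_atTop ((M - m) / δ), eventually_ge_atTop 0] with K hK hK0
  refine le_lipschitzEnvelope hD fun y hy => ?_
  rcases lt_or_ge (dist y x) δ with hyx | hyx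
  · linarith [hball hyx hy, mul_nonneg hK0 (dist_nonneg (x := x) (y := y))]
  · have := (div_le_iff₀ hδ).1 hK
    have := mul_le_mul_of_nonneg_left (dist_comm x y ▸ hyx) hK0
    linarith [hm y hy]

end LipschitzEnvelope

lemma convexOn_lipschitzEnvelope {E : Type*} [NormedAddCommGroup E] [NormedSpace ℝ E]
    {D : Set E} {f : E → ℝ} {m K : ℝ} (hD : D.Nonempty) (hm : ∀ y ∈ D, m ≤ f y) (hK : 0 ≤ K)
    (hf : ConvexOn ℝ D f) : ConvexOn ℝ univ (lipschitzEnvelope D f K) := by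
  refine ⟨convex_univ, fun x₁ _ x₂ _ a b ha hb hab => ?_⟩
  set F := fun x y => f y + K * dist x y
  have key : ∀ y₁ ∈ D, ∀ y₂ ∈ D,
      lipschitzEnvelope D f K (a • x₁ + b • x₂) ≤ a * F x₁ y₁ + b * F x₂ y₂ := by
    intro y₁ hy₁ y₂ hy₂
    have hdist : dist (a • x₁ + b • x₂) (a • y₁ + b • y₂) ≤ a * dist x₁ y₁ + b * dist x₂ y₂ := by
      calc _ ≤ dist (a • x₁) (a • y₁) + dist (b • x₂) (b • y₂) := dist_add_add_le _ _ _ _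
        _ = _ := by rw [dist_smul₀, dist_smul₀, Real.norm_of_nonneg ha, Real.norm_of_nonneg hb]
    calc _ ≤ f (a • y₁ + b • y₂) + K * dist (a • x₁ + b • x₂) (a • y₁ + b • y₂) :=
          lipschitzEnvelope_le hm hK (hf.1 hy₁ hy₂ ha hb hab)
      _ ≤ (a * f y₁ + b * f y₂) + K * (a * dist x₁ y₁ + b * dist x₂ y₂) := by
          gcongr
          exact hf.2 hy₁ hy₂ ha hb hab
      _ = a * F x₁ y₁ + b * F x₂ y₂ := by ring
  have := hD.to_subtype
  have key₁ : ∀ y₂ ∈ D, lipschitzEnvelope D f K (a • x₁ + b • x₂) - b * F x₂ y₂ ≤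
      a * lipschitzEnvelope D f K x₁ := fun y₂ hy₂ => by
    refine (le_ciInf fun y₁ => ?_).trans_eq (Real.mul_iInf_of_nonneg ha _).symm
    linarith [key y₁ y₁.2 y₂ hy₂]
  have key₂ : lipschitzEnvelope D f K (a • x₁ + b • x₂) - a * lipschitzEnvelope D f K x₁ ≤
      b * lipschitzEnvelope D f K x₂ := by
    refine (le_ciInf fun y₂ => ?_).trans_eq (Real.mul_iInf_of_nonneg hb _).symm
    linarith [key₁ y₂ y₂.2]
  simp only [smul_eq_mul]
  linarith

/-- Junk unless `k * x - C k` is bounded above in `k`, e.g. when `k ^ 2 ≤ C k`. -/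
def natAffineSup (C : ℕ → ℝ) (x : ℝ) : ℝ :=
  ⨆ k : ℕ, ((k : ℝ) * x - C k)

section NatAffineSup

variable {C : ℕ → ℝ}

lemma bddAbove_range_affine (hC : ∀ k : ℕ, (k : ℝ) ^ 2 ≤ C k) (x : ℝ) :
    BddAbove (range fun k : ℕ => (k : ℝ) * x - C k) := by
  refine ⟨x ^ 2 / 4, ?_⟩
  rintro _ ⟨k, rfl⟩
  nlinarith [sq_nonneg (x / 2 - k), hC k]

lemma le_natAffineSup (hC : ∀ k : ℕ, (k : ℝ) ^ 2 ≤ C k) (k : ℕ) (x : ℝ) :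
    (k : ℝ) * x - C k ≤ natAffineSup C x :=
  le_ciSup (bddAbove_range_affine hC x) k

lemma natAffineSup_le {x c : ℝ} (h : ∀ k : ℕ, (k : ℝ) * x - C k ≤ c) : natAffineSup C x ≤ c :=
  ciSup_le h

lemma convexOn_natAffineSup (hC : ∀ k : ℕ, (k : ℝ) ^ 2 ≤ C k) :
    ConvexOn ℝ univ (natAffineSup C) := by
  refine ⟨convex_univ, fun a _ b _ ta tb hta htb hab => natAffineSup_le fun k => ?_⟩
  have ha := mul_le_mul_of_nonneg_left (le_natAffineSup hC k a) hta
  have hb := mul_le_mul_of_nonneg_left (le_natAffineSup hC k b) htb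
  simp only [smul_eq_mul]
  linear_combination ha + hb + C k * hab

lemma continuous_natAffineSup (hC : ∀ k : ℕ, (k : ℝ) ^ 2 ≤ C k) : Continuous (natAffineSup C) :=
  (convexOn_natAffineSup hC).locallyLipschitz.continuous

lemma tendsto_natAffineSup_div_atTop (hC : ∀ k : ℕ, (k : ℝ) ^ 2 ≤ C k) :
    Tendsto (fun x => natAffineSup C x / x) atTop atTop := by
  refine tendsto_atTop.2 fun b => ?_
  obtain ⟨k, hk⟩ := exists_nat_ge (b + 1)
  filter_upwards [eventually_ge_atTop (max 1 (C k))] with x hx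
  have hx0 : 0 < x := one_pos.trans_le (le_of_max_le_left hx)
  rw [le_div_iff₀ hx0]
  nlinarith [le_natAffineSup hC k x, le_of_max_le_right hx]

end NatAffineSup

lemma EReal.coe_le_of_le_toReal {a : EReal} (ha : a ≠ ⊥) {r : ℝ} (h : a ≠ ⊤ → r ≤ a.toReal) :
    (r : EReal) ≤ a := by
  by_cases hat : a = ⊤
  · exact hat ▸ le_top
  · exact (EReal.coe_le_coe_iff.2 (h hat)).trans (EReal.coe_toReal_le ha)

lemma ConvexOn.coe_ereal_le {F : ℝ → ℝ} (hF : ConvexOn ℝ univ F) {x y t : ℝ}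
    (ht : t ∈ Icc (0 : ℝ) 1) :
    ((F (t * x + (1 - t) * y) : ℝ) : EReal) ≤ (t : EReal) * F x + ((1 - t : ℝ) : EReal) * F y := by
  rw [← EReal.coe_mul, ← EReal.coe_mul, ← EReal.coe_add, EReal.coe_le_coe_iff]
  simpa only [smul_eq_mul] using
    hF.2 (mem_univ x) (mem_univ y) ht.1 (sub_nonneg.2 ht.2) (add_sub_cancel t 1)

lemma ConvexOn.exists_tendsto_slope_nhdsGT {F : ℝ → ℝ} (hF : ConvexOn ℝ univ F) (a : ℝ) :
    ∃ L : ℝ, Tendsto (fun x => (F x - F a) / (x - a)) (𝓝[>] a) (𝓝 L) := by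
  have := (hF.hasDerivWithinAt_rightDeriv_of_mem_interior (x := a) (by simp))
  rw [hasDerivWithinAt_iff_tendsto_slope, sdiff_singleton_eq_self self_notMem_Ioi] at this
  exact ⟨_, this.congr fun x => slope_def_field F a x⟩

section SuperlinearEReal

variable {h : ℝ → EReal}

lemma eventually_coe_mul_le (hsuper : Tendsto (fun x : ℝ => h x / (x : EReal)) atTop (𝓝 ⊤))
    (c : ℝ) : ∀ᶠ x in atTop, ((c * x : ℝ) : EReal) ≤ h x := by
  filter_upwards [EReal.tendsto_nhds_top_iff_real.1 hsuper c, eventually_gt_atTop 0] with x hc hx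
  rw [EReal.coe_mul]
  exact (EReal.lt_div_iff (by exact_mod_cast hx) (EReal.coe_ne_top x)).1 hc |>.le

lemma exists_forall_coe_le (hbot : ∀ x, h x ≠ ⊥) (hlsc : LowerSemicontinuousOn h (Ici 0))
    (hsuper : Tendsto (fun x : ℝ => h x / (x : EReal)) atTop (𝓝 ⊤)) :
    ∃ m : ℝ, ∀ y, 0 ≤ y → (m : EReal) ≤ h y := by
  obtain ⟨R, hR⟩ := eventually_atTop.1 (eventually_coe_mul_le hsuper 0)
  obtain ⟨y₀, -, hy₀⟩ := (hlsc.mono Icc_subset_Ici_self).exists_isMinOn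
    (nonempty_Icc.2 (le_max_right R 0)) isCompact_Icc
  refine ⟨min 0 (h y₀).toReal, fun y hy => ?_⟩
  rcases le_total y (max R 0) with hyR | hyR
  · exact (EReal.coe_le_coe_iff.2 (min_le_right _ _)).trans
      ((EReal.coe_toReal_le (hbot y₀)).trans (hy₀ ⟨hy, hyR⟩))
  · simpa using (EReal.coe_le_coe_iff.2 (min_le_left _ _)).trans
      (hR y ((le_max_left R 0).trans hyR))

lemma exists_affine_minorants {m : ℝ} (hm : ∀ y, 0 ≤ y → (m : EReal) ≤ h y)
    (hsuper : Tendsto (fun x : ℝ => h x / (x : EReal)) atTop (𝓝 ⊤)) :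
    ∃ C : ℕ → ℝ, (∀ k : ℕ, (k : ℝ) ^ 2 ≤ C k) ∧
      ∀ (k : ℕ) (x : ℝ), 0 ≤ x → (((k : ℝ) * x - C k : ℝ) : EReal) ≤ h x := by
  choose R hR using fun k : ℕ => eventually_atTop.1 (eventually_coe_mul_le hsuper k)
  refine ⟨fun k => (k : ℝ) ^ 2 + k * max (R k) 0 + |m|, fun k => ?_, fun k x hx => ?_⟩
  · nlinarith [abs_nonneg m, le_max_right (R k) 0, (Nat.cast_nonneg k : (0 : ℝ) ≤ k)]
  rcases le_total x (max (R k) 0) with hxR | hxR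
  · refine le_trans (EReal.coe_le_coe_iff.2 ?_) (hm x hx)
    nlinarith [neg_abs_le m, (Nat.cast_nonneg k : (0 : ℝ) ≤ k), sq_nonneg (k : ℝ)]
  · refine le_trans (EReal.coe_le_coe_iff.2 ?_) (hR k x ((le_max_left _ _).trans hxR))
    nlinarith [abs_nonneg m, le_max_right (R k) 0, (Nat.cast_nonneg k : (0 : ℝ) ≤ k)]

lemma exists_convex_superlinear_minorant (hbot : ∀ x, h x ≠ ⊥) {m : ℝ}
    (hm : ∀ y, 0 ≤ y → (m : EReal) ≤ h y)
    (hsuper : Tendsto (fun x : ℝ => h x / (x : EReal)) atTop (𝓝 ⊤)) :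
    ∃ φ : ℝ → ℝ, ConvexOn ℝ univ φ ∧ Continuous φ ∧ Tendsto (fun x => φ x / x) atTop atTop ∧
      ∀ x, 0 ≤ x → (φ x : EReal) ≤ h x := by
  obtain ⟨C, hC, hCh⟩ := exists_affine_minorants hm hsuper
  refine ⟨natAffineSup C, convexOn_natAffineSup hC, continuous_natAffineSup hC,
    tendsto_natAffineSup_div_atTop hC, fun x hx => EReal.coe_le_of_le_toReal (hbot x) fun hxt => ?_⟩
  refine natAffineSup_le fun k => ?_
  rw [← EReal.coe_le_coe_iff, EReal.coe_toReal hxt (hbot x)]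
  exact hCh k x hx

lemma convexOn_toReal_of_ne_top (hbot : ∀ x, h x ≠ ⊥)
    (hconv : ∀ x y : ℝ, 0 ≤ x → 0 ≤ y → ∀ t : ℝ, t ∈ Icc (0:ℝ) 1 →
      h (t * x + (1 - t) * y) ≤ (t : EReal) * h x + ((1 - t : ℝ) : EReal) * h y) :
    ConvexOn ℝ {y | 0 ≤ y ∧ h y ≠ ⊤} fun y => (h y).toReal := by
  have key : ∀ x ∈ {y | 0 ≤ y ∧ h y ≠ ⊤}, ∀ y ∈ {y | 0 ≤ y ∧ h y ≠ ⊤}, ∀ a b : ℝ, 0 ≤ a →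
      0 ≤ b → a + b = 1 → h (a • x + b • y) ≤ ((a * (h x).toReal + b * (h y).toReal : ℝ) : EReal) := by
    rintro x ⟨hx, hxt⟩ y ⟨hy, hyt⟩ a b ha hb hab
    obtain rfl : b = 1 - a := by linarith
    have := hconv x y hx hy a ⟨ha, by linarith⟩
    rwa [← EReal.coe_toReal hxt (hbot x), ← EReal.coe_toReal hyt (hbot y)] at this
  refine ⟨fun x hx y hy a b ha hb hab => ⟨?_, ?_⟩, fun x hx y hy a b ha hb hab => ?_⟩
  · exact add_nonneg (mul_nonneg ha hx.1) (mul_nonneg hb hy.1)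
  · exact ne_top_of_le_ne_top (EReal.coe_ne_top _) (key x hx y hy a b ha hb hab)
  · exact EReal.toReal_le_toReal (key x hx y hy a b ha hb hab) (hbot _) (EReal.coe_ne_top _)

lemma exists_real_approximants (hbot : ∀ x, h x ≠ ⊥)
    (hconv : ∀ x y : ℝ, 0 ≤ x → 0 ≤ y → ∀ t : ℝ, t ∈ Icc (0:ℝ) 1 →
      h (t * x + (1 - t) * y) ≤ (t : EReal) * h x + ((1 - t : ℝ) : EReal) * h y)
    (hlsc : LowerSemicontinuousOn h (Ici 0)) (hproper : ∃ x : ℝ, 0 ≤ x ∧ h x ≠ ⊤)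
    (hsuper : Tendsto (fun x : ℝ => h x / (x : EReal)) atTop (𝓝 ⊤)) :
    ∃ H : ℕ → ℝ → ℝ, (∀ n, ConvexOn ℝ univ (H n)) ∧ (∀ n, Continuous (H n)) ∧
      (∀ n, Tendsto (fun x => H n x / x) atTop atTop) ∧ (∀ n x, H n x ≤ H (n + 1) x) ∧
      (∀ n x, 0 ≤ x → (H n x : EReal) ≤ h x) ∧
      ∀ x, 0 ≤ x → ∀ M : ℝ, (M : EReal) < h x → ∀ᶠ n in atTop, M ≤ H n x := by
  obtain ⟨m, hm⟩ := exists_forall_coe_le hbot hlsc hsuper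
  obtain ⟨φ, hφconv, hφcont, hφsuper, hφh⟩ := exists_convex_superlinear_minorant hbot hm hsuper
  set D := {y : ℝ | 0 ≤ y ∧ h y ≠ ⊤}
  have hD : D.Nonempty := hproper
  have hmD : ∀ y ∈ D, m ≤ (h y).toReal := fun y hy => by
    rw [← EReal.coe_le_coe_iff, EReal.coe_toReal hy.2 (hbot y)]
    exact hm y hy.1
  set g := fun n : ℕ => lipschitzEnvelope D (fun y => (h y).toReal) n
  refine ⟨fun n x => max (g n x) (φ x), fun n => ?_, fun n => ?_, fun n => ?_, fun n x => ?_,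
    fun n x hx => ?_, fun x hx M hM => ?_⟩
  · exact (convexOn_lipschitzEnvelope hD hmD n.cast_nonneg
      (convexOn_toReal_of_ne_top hbot hconv)).sup hφconv
  · exact (lipschitzWith_lipschitzEnvelope hD hmD n.cast_nonneg).continuous.max hφcont
  · refine tendsto_atTop_mono' _ ?_ hφsuper
    filter_upwards [eventually_gt_atTop 0] with x hx
    exact div_le_div_of_nonneg_right (le_max_right _ _) hx.le
  · exact max_le_max_right _ (lipschitzEnvelope_mono hD hmD n.cast_nonneg (by simp))
  · refine EReal.coe_le_of_le_toReal (hbot x) fun hxt => max_le ?_ ?_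
    · exact lipschitzEnvelope_le_self hmD n.cast_nonneg ⟨hx, hxt⟩
    · rw [← EReal.coe_le_coe_iff, EReal.coe_toReal hxt (hbot x)]
      exact hφh x hx
  · have hMD : ∀ᶠ y in 𝓝 x, y ∈ D → M ≤ (h y).toReal := by
      filter_upwards [eventually_nhdsWithin_iff.1 (hlsc x hx M hM)] with y hy hyD
      rw [← EReal.coe_le_coe_iff, EReal.coe_toReal hyD.2 (hbot y)]
      exact (hy hyD.1).le
    filter_upwards [tendsto_natCast_atTop_atTop.eventually
      (eventually_le_lipschitzEnvelope hD hmD hMD)] with n hn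
    exact hn.trans (le_max_left _ _)

end SuperlinearEReal

end

/-- Approximation of a convex l.s.c. superlinear function `h : ℝ₊ → ℝ ∪ {+∞}` by an
increasing sequence `hₙ` of convex l.s.c. functions, each finite in a neighborhood of `0`
with finite right derivative at `0` and superlinear, converging pointwise to `h`. -/
theorem stmt_5 (h : ℝ → EReal)
    (hbot : ∀ x, h x ≠ ⊥)
    (hconv : ∀ x y : ℝ, 0 ≤ x → 0 ≤ y → ∀ t : ℝ, t ∈ Set.Icc (0:ℝ) 1 →
      h (t * x + (1 - t) * y) ≤ (t : EReal) * h x + ((1 - t : ℝ) : EReal) * h y)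
    (hlsc : LowerSemicontinuousOn h (Set.Ici 0))
    (hproper : ∃ x : ℝ, 0 ≤ x ∧ h x ≠ ⊤)
    (hsuper : Tendsto (fun x : ℝ => h x / (x : EReal)) atTop (nhds ⊤)) :
    ∃ hn : ℕ → ℝ → EReal,
      (∀ n x, hn n x ≠ ⊥) ∧
      (∀ n, ∀ x y : ℝ, 0 ≤ x → 0 ≤ y → ∀ t : ℝ, t ∈ Set.Icc (0:ℝ) 1 →
        hn n (t * x + (1 - t) * y) ≤ (t : EReal) * hn n x + ((1 - t : ℝ) : EReal) * hn n y) ∧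
      (∀ n, LowerSemicontinuousOn (hn n) (Set.Ici 0)) ∧
      (∀ n, ∃ δ > (0:ℝ), ∀ x ∈ Set.Ico (0:ℝ) δ, hn n x ≠ ⊤) ∧
      (∀ n, ∃ L : ℝ, Tendsto (fun x : ℝ => ((hn n x).toReal - (hn n 0).toReal) / x)
        (nhdsWithin 0 (Set.Ioi 0)) (nhds L)) ∧
      (∀ n, Tendsto (fun x : ℝ => hn n x / (x : EReal)) atTop (nhds ⊤)) ∧
      (∀ n x, 0 ≤ x → hn n x ≤ hn (n + 1) x) ∧
      (∀ x, 0 ≤ x → Tendsto (fun n => hn n x) atTop (nhds (h x))) := by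
  obtain ⟨H, hconvH, hcontH, hsuperH, hmonoH, hHh, hHlim⟩ :=
    exists_real_approximants hbot hconv hlsc hproper hsuper
  refine ⟨fun n x => H n x, fun n x => EReal.coe_ne_bot _,
    fun n x y _ _ t ht => (hconvH n).coe_ereal_le ht,
    fun n => (continuous_coe_real_ereal.comp (hcontH n)).lowerSemicontinuous.lowerSemicontinuousOn _,
    fun n => ⟨1, one_pos, fun x _ => EReal.coe_ne_top _⟩,
    fun n => by simpa using (hconvH n).exists_tendsto_slope_nhdsGT 0,
    fun n => EReal.tendsto_coe_nhds_top_iff.2 (hsuperH n),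
    fun n x _ => EReal.coe_le_coe_iff.2 (hmonoH n x), fun x hx => ?_⟩
  refine tendsto_order.2 ⟨fun a ha => ?_, fun a ha => .of_forall fun n => (hHh n x hx).trans_lt ha⟩
  obtain ⟨M, haM, hM⟩ := EReal.lt_iff_exists_real_btwn.1 ha
  filter_upwards [hHlim x hx M hM] with n hn
  exact haM.trans_le (EReal.coe_le_coe_iff.2 hn)
end

section
/- Let αₙ : ℝ^d → ℝ be convex functions with αₙ(0) = 0, differentiable at 0, converging locally uniformly to a convex function α which is differentiable at 0 with ∇α(0) = 0. Then ∇αₙ(0) → 0. -/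
/-!
A convex function lies above its tangent hyperplane, so on the closed ball of radius `r` the
linear form `∇αₙ(0)` is bounded in absolute value by `sup_{B_r} αₙ`, whence
`‖∇αₙ(0)‖ ≤ sup_{B_r} αₙ / r`. Since `∇α(0) = 0`, the limit satisfies `α ≤ ε r / 2` on a small
ball `B_r`, and uniform convergence on `B_r` gives `αₙ ≤ ε r` there for large `n`.
-/

open Filter Topology Metric Set

section

variable {E : Type*} [NormedAddCommGroup E] [NormedSpace ℝ E]

theorem ConvexOn.add_apply_sub_le_of_hasFDerivAt {s : Set E} {f : E → ℝ} {f' : E →L[ℝ] ℝ}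
    {a x : E} (hf : ConvexOn ℝ s f) (ha : a ∈ s) (hx : x ∈ s) (hf' : HasFDerivAt f f' a) :
    f a + f' (x - a) ≤ f x := by
  set g : ℝ →ᵃ[ℝ] E := AffineMap.lineMap a x
  have hg : HasDerivAt (f ∘ g) (f' (x - a)) 0 := by
    have : HasFDerivAt f f' (g 0) := by simpa [g] using hf'
    exact this.comp_hasDerivAt 0 AffineMap.hasDerivAt_lineMap
  have hslope : slope (f ∘ g) 0 1 = f x - f a := by simp [slope_def_field, g]
  have := (hf.comp_affineMap g).le_slope_of_hasDerivAt
    (by simpa [g] using ha) (by simpa [g] using hx) zero_lt_one hg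
  linarith

theorem ConvexOn.norm_le_of_hasFDerivAt_of_forall_mem_closedBall_le {f : E → ℝ}
    {f' : E →L[ℝ] ℝ} {a : E} {r M : ℝ} (hf : ConvexOn ℝ (closedBall a r) f) (hr : 0 < r)
    (hf' : HasFDerivAt f f' a) (hM : ∀ x ∈ closedBall a r, f x ≤ f a + M) : ‖f'‖ ≤ M / r := by
  have ha : a ∈ closedBall a r := mem_closedBall_self hr.le
  refine f'.opNorm_bound_of_ball_bound hr M fun v hv => ?_
  have hv' : ‖v‖ ≤ r := mem_closedBall_zero_iff.mp hv
  have hplus : a + v ∈ closedBall a r := by simpa using hv'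
  have hminus : a - v ∈ closedBall a r := by simpa using hv'
  have h₁ := hf.add_apply_sub_le_of_hasFDerivAt ha hplus hf'
  have h₂ := hf.add_apply_sub_le_of_hasFDerivAt ha hminus hf'
  simp only [add_sub_cancel_left, sub_sub_cancel_left, map_neg] at h₁ h₂
  rw [Real.norm_eq_abs, abs_le]
  constructor <;> linarith [hM _ hplus, hM _ hminus]

theorem HasFDerivAt.exists_pos_forall_mem_closedBall_norm_sub_le {F : Type*}
    [NormedAddCommGroup F] [NormedSpace ℝ F] {f : E → F} {a : E}
    (hf : HasFDerivAt f (0 : E →L[ℝ] F) a) {c : ℝ} (hc : 0 < c) :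
    ∃ r > 0, ∀ x ∈ closedBall a r, ‖f x - f a‖ ≤ c * r := by
  have hsmall : ∀ᶠ x in 𝓝 a, ‖f x - f a‖ ≤ c * ‖x - a‖ := by
    simpa using hf.isLittleO.def hc
  obtain ⟨r, hr, hball⟩ := nhds_basis_closedBall.eventually_iff.mp hsmall
  refine ⟨r, hr, fun x hx => (hball hx).trans ?_⟩
  gcongr
  exact mem_closedBall_iff_norm.mp hx

end

theorem stmt_10_general (d : ℕ) (αn : ℕ → EuclideanSpace ℝ (Fin d) → ℝ)
    (α : EuclideanSpace ℝ (Fin d) → ℝ)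
    (hconvn : ∀ n, ConvexOn ℝ Set.univ (αn n))
    (h0 : ∀ n, αn n 0 = 0)
    (hdiffn : ∀ n, DifferentiableAt ℝ (αn n) 0)
    (hdiff : DifferentiableAt ℝ α 0)
    (hgrad : gradient α 0 = 0)
    (hunif : TendstoLocallyUniformly αn α atTop) :
    Tendsto (fun n => gradient (αn n) 0) atTop (nhds 0) := by
  have hα0 : α 0 = 0 := by
    have := hunif.tendstoLocallyUniformlyOn.tendsto_at (mem_univ 0)
    simp only [h0] at this
    exact (tendsto_nhds_unique tendsto_const_nhds this).symm
  have hα : HasFDerivAt α (0 : EuclideanSpace ℝ (Fin d) →L[ℝ] ℝ) 0 := by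
    simpa [hgrad] using hasGradientAt_iff_hasFDerivAt.mp hdiff.hasGradientAt
  refine nhds_basis_closedBall.tendsto_right_iff.mpr fun ε hε => ?_
  obtain ⟨r, hr, hαr⟩ := hα.exists_pos_forall_mem_closedBall_norm_sub_le (half_pos hε)
  have hunif_r : TendstoUniformlyOn αn α atTop (closedBall 0 r) :=
    tendstoLocallyUniformly_iff_forall_isCompact.mp hunif _ (isCompact_closedBall 0 r)
  filter_upwards [Metric.tendstoUniformlyOn_iff.mp hunif_r _ (mul_pos (half_pos hε) hr)]
    with n hn
  have hbound : ∀ x ∈ closedBall 0 r, αn n x ≤ αn n 0 + ε * r := by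
    intro x hx
    have hαx := hαr x hx
    have hαnx := hn x hx
    rw [hα0, sub_zero, Real.norm_eq_abs] at hαx
    rw [Real.dist_eq] at hαnx
    linarith [h0 n, abs_le.mp hαx, abs_lt.mp hαnx]
  have hnorm := ((hconvn n).subset (subset_univ _) (convex_closedBall 0 r))
    |>.norm_le_of_hasFDerivAt_of_forall_mem_closedBall_le hr
      (hasGradientAt_iff_hasFDerivAt.mp (hdiffn n).hasGradientAt) hbound
  rw [mem_closedBall_zero_iff, ← (InnerProductSpace.toDual ℝ _).norm_map]
  simpa [hr.ne'] using hnorm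

/-- Convergence of gradients at `0` for convex functions `αₙ` with `αₙ(0) = 0` converging
locally uniformly to a convex function `α` with `∇α(0) = 0`. -/
theorem stmt_10 (d : ℕ) (αn : ℕ → EuclideanSpace ℝ (Fin d) → ℝ)
    (α : EuclideanSpace ℝ (Fin d) → ℝ)
    (hconvn : ∀ n, ConvexOn ℝ Set.univ (αn n))
    (h0 : ∀ n, αn n 0 = 0)
    (hdiffn : ∀ n, DifferentiableAt ℝ (αn n) 0)
    (hconv : ConvexOn ℝ Set.univ α)
    (hdiff : DifferentiableAt ℝ α 0)
    (hgrad : gradient α 0 = 0)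
    (hunif : TendstoLocallyUniformly αn α atTop) :
    Tendsto (fun n => gradient (αn n) 0) atTop (nhds 0) :=
  stmt_10_general d αn α hconvn h0 hdiffn hdiff hgrad hunif
end

section
/- Let μ, ν be probability measures on Ω ⊆ ℝ^d, γ ∈ Π(μ,ν) a transport plan, and define A(γ) := {x ∈ Ω : the only point (x,y) ∈ spt(γ) with first coordinate x is (x,x)}. Then μ restricted to A(γ) is at most ν restricted to A(γ), i.e., μ(E ∩ A(γ)) ≤ ν(E ∩ A(γ)) for every Borel set E. -/
open MeasureTheory

/-- The support of a measure on a topological space: points all of whose open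
neighborhoods have positive measure. -/
def measureSupport {E : Type*} [TopologicalSpace E] [MeasurableSpace E]
    (γ : Measure E) : Set E :=
  {p | ∀ U : Set E, IsOpen U → p ∈ U → 0 < γ U}

lemma measureSupport_compl_open {E : Type*} [TopologicalSpace E] [MeasurableSpace E]
    (γ : Measure E) : IsOpen (measureSupport γ)ᶜ := by
  rw [isOpen_iff_mem_nhds]
  intro p hp
  simp only [measureSupport, Set.mem_compl_iff, Set.mem_setOf_eq, not_forall] at hp
  obtain ⟨U, hU, hpU, hγU⟩ := hp
  push_neg at hγU
  have hγU0 : γ U = 0 := le_antisymm hγU bot_le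
  refine Filter.mem_of_superset (hU.mem_nhds hpU) ?_
  intro q hq
  simp only [Set.mem_compl_iff, measureSupport, Set.mem_setOf_eq, not_forall]
  exact ⟨U, hU, hq, by simp [hγU0]⟩

lemma measureSupport_compl_null {E : Type*} [TopologicalSpace E]
    [SecondCountableTopology E] [MeasurableSpace E]
    (γ : Measure E) : γ (measureSupport γ)ᶜ = 0 := by
  have hsub : (measureSupport γ)ᶜ ⊆ ⋃₀ {U : Set E | IsOpen U ∧ γ U = 0} := by
    intro p hp
    simp only [measureSupport, Set.mem_compl_iff, Set.mem_setOf_eq, not_forall] at hp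
    obtain ⟨U, hU, hpU, hγU⟩ := hp
    push_neg at hγU
    exact ⟨U, ⟨hU, le_antisymm hγU bot_le⟩, hpU⟩
  obtain ⟨T, hTc, hTsub, hTU⟩ :=
    TopologicalSpace.isOpen_sUnion_countable {U : Set E | IsOpen U ∧ γ U = 0}
      (fun U hU => hU.1)
  have : γ (⋃₀ {U : Set E | IsOpen U ∧ γ U = 0}) = 0 := by
    rw [← hTU]
    exact (measure_sUnion_null_iff hTc).2 fun U hU => (hTsub hU).2
  exact measure_mono_null hsub this

/-- If `γ` is a transport plan between `μ` and `ν` (supported on `Ω ⊆ ℝ^d`) and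
`A(γ)` is the set of points `x ∈ Ω` such that the only point of `spt(γ)` with first
coordinate `x` is `(x,x)`, then `μ ⌊ A(γ) ≤ ν ⌊ A(γ)`. -/
theorem stmt_11 (d : ℕ) (Ω : Set (EuclideanSpace ℝ (Fin d)))
    (μ ν : Measure (EuclideanSpace ℝ (Fin d)))
    [IsProbabilityMeasure μ] [IsProbabilityMeasure ν]
    (hμΩ : μ Ωᶜ = 0) (hνΩ : ν Ωᶜ = 0)
    (γ : Measure (EuclideanSpace ℝ (Fin d) × EuclideanSpace ℝ (Fin d)))
    (hγ₁ : γ.map Prod.fst = μ) (hγ₂ : γ.map Prod.snd = ν)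
    (A : Set (EuclideanSpace ℝ (Fin d)))
    (hA : A = {x | x ∈ Ω ∧ ∀ y, (x, y) ∈ measureSupport γ → y = x}) :
    ∀ E : Set (EuclideanSpace ℝ (Fin d)), MeasurableSet E → μ (E ∩ A) ≤ ν (E ∩ A) := by
  intro E hE
  set S := measureSupport γ with hS
  have hSclosed : IsClosed S := ⟨measureSupport_compl_open γ⟩
  have hSnull : γ Sᶜ = 0 := measureSupport_compl_null γ
  -- Key step: for every open `U ⊇ E ∩ A`, `μ (E ∩ A) ≤ ν U`.
  have key : ∀ U : Set (EuclideanSpace ℝ (Fin d)), IsOpen U → E ∩ A ⊆ U →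
      μ (E ∩ A) ≤ ν U := by
    intro U hUopen hUsub
    -- the projection of `S ∩ snd⁻¹ Uᶜ` is σ-compact, hence measurable
    set C : Set (EuclideanSpace ℝ (Fin d) × EuclideanSpace ℝ (Fin d)) :=
      S ∩ Prod.snd ⁻¹' Uᶜ with hC
    have hCclosed : IsClosed C := hSclosed.inter (hUopen.isClosed_compl.preimage continuous_snd)
    have hCsigma : IsSigmaCompact C :=
      IsSigmaCompact.of_isClosed_subset isSigmaCompact_univ hCclosed (Set.subset_univ _)
    set P : Set (EuclideanSpace ℝ (Fin d)) := Prod.fst '' C with hP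
    have hPsigma : IsSigmaCompact P := hCsigma.image continuous_fst
    have hPmeas : MeasurableSet P := by
      obtain ⟨K, hK, hKU⟩ := hPsigma
      rw [← hKU]
      exact MeasurableSet.iUnion fun n => (hK n).isClosed.measurableSet
    -- `E ∩ A` avoids `P`
    have hEA_sub : E ∩ A ⊆ Pᶜ := by
      rintro x ⟨hxE, hxA⟩ hxP
      obtain ⟨⟨x', y⟩, ⟨hxyS, hyU⟩, hfst⟩ := hxP
      have hx' : x' = x := hfst
      subst hx'
      have hxA2 := hxA
      rw [hA] at hxA2
      have hy : y = x' := hxA2.2 y hxyS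
      refine hyU (show y ∈ U from ?_)
      rw [hy]
      exact hUsub ⟨hxE, hxA⟩
    -- preimage of `Pᶜ` under `fst` is inside `snd⁻¹ U ∪ Sᶜ`
    have hpre : Prod.fst ⁻¹' Pᶜ ⊆ Prod.snd ⁻¹' U ∪ Sᶜ := by
      rintro ⟨x, y⟩ hxy
      by_cases hxyS : (x, y) ∈ S
      · left
        by_contra hyU
        exact hxy ⟨(x, y), ⟨hxyS, hyU⟩, rfl⟩
      · exact Or.inr hxyS
    calc μ (E ∩ A) ≤ μ Pᶜ := measure_mono hEA_sub
      _ = γ (Prod.fst ⁻¹' Pᶜ) := by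
          rw [← hγ₁, Measure.map_apply measurable_fst hPmeas.compl]
      _ ≤ γ (Prod.snd ⁻¹' U ∪ Sᶜ) := measure_mono hpre
      _ ≤ γ (Prod.snd ⁻¹' U) + γ Sᶜ := measure_union_le _ _
      _ = ν U := by
          rw [hSnull, add_zero, ← hγ₂,
            Measure.map_apply measurable_snd hUopen.measurableSet]
  -- conclude by outer regularity of `ν`
  by_contra h
  push_neg at h
  obtain ⟨U, hUT, hUopen, hUν⟩ := Set.exists_isOpen_lt_of_lt (μ := ν) (E ∩ A) _ h
  exact absurd (key U hUopen hUT) (not_le.2 hUν)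
end

section
/- Let Ω = ℝ, f = 𝟙_{[0,∞)}, and g = (1/n)·𝟙_{[-n,0]}. Then the W₂-projection of g onto K_f = {ρ : ∫ρ = 1, ρ ≤ f} is ρ = 𝟙_{[0,1]}, and the total variations satisfy TV(ρ) = 2, TV(f) = 1, TV(g) = 2/n; in particular, TV(ρ) = TV(g) + 2·TV(f) − 2/n, showing the constant 2 in the estimate TV(P_{K_f} g) ≤ TV(g) + 2·TV(f) is sharp. -/
open MeasureTheory
open scoped ENNReal

noncomputable section

/-- The set of transport plans between two measures. -/
def Couplings {E : Type*} [MeasurableSpace E] (μ ν : Measure E) : Set (Measure (E × E)) :=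
  {γ | γ.map Prod.fst = μ ∧ γ.map Prod.snd = ν}

/-- The squared 2-Wasserstein cost between two measures. -/
def W2sq {E : Type*} [MeasurableSpace E] [Dist E] (μ ν : Measure E) : ℝ≥0∞ :=
  ⨅ γ ∈ Couplings μ ν, ∫⁻ p : E × E, ENNReal.ofReal (dist p.1 p.2 ^ 2) ∂γ

/-- Membership in `K_f`: a probability density bounded above by `f`. -/
def MemKf (f ρ : ℝ → ℝ) : Prop :=
  (∀ᵐ x, 0 ≤ ρ x) ∧ (∀ᵐ x, ρ x ≤ f x) ∧ ∫⁻ x, ENNReal.ofReal (ρ x) = 1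

open Set

/-!
The map `T x = n x - n` pushes `𝟙_{[0,1]}` onto `g`. With `m = min x 1`, the Kantorovich
potentials `φ x = (1 - n) m² + 2 n m` and `ψ y = (1 - 1/n) y² - 2 y` satisfy
`φ x + ψ y ≤ (x - y)² + n` for `x ≥ 0 ≥ y`, with equality on the graph of `T` over `[0,1]`.
Hence `W₂²(ρ, g) ≤ ∫ φ dρ + ∫ ψ dg - n` and `W₂²(ρ', g) ≥ ∫ φ dρ' + ∫ ψ dg - n` for every
`ρ' ∈ K_f`. As `φ ≤ 1 + n` on `[0,1]` and `φ = 1 + n` on `[1,∞)`, the bathtub principle gives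
`∫ φ dρ ≤ ∫ φ dρ'` for densities `ρ' ≤ 𝟙_{[0,∞)}` of mass one.
-/

section Variation

variable {α : Type*} [LinearOrder α] {f : α → ℝ} {s : Set α} {x y : α}

theorem MonotoneOn.eVariationOn_eq_of_isMinOn_of_isMaxOn (hf : MonotoneOn f s) (hx : x ∈ s)
    (hy : y ∈ s) (hmin : IsMinOn f s x) (hmax : IsMaxOn f s y) :
    eVariationOn f s = ENNReal.ofReal (f y - f x) := by
  refine le_antisymm ?_ ((hf.eVariationOn_eq hx hy).symm.trans_le
    (eVariationOn.mono f inter_subset_left))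
  rw [eVariationOn.eq_biSup_inter_Icc]
  refine iSup₂_le fun p hp => ?_
  rw [hf.eVariationOn_eq hp.1 hp.2.1]
  exact ENNReal.ofReal_le_ofReal
    (sub_le_sub (isMaxOn_iff.1 hmax _ hp.2.1) (isMinOn_iff.1 hmin _ hp.1))

theorem AntitoneOn.eVariationOn_eq_of_isMaxOn_of_isMinOn (hf : AntitoneOn f s) (hx : x ∈ s)
    (hy : y ∈ s) (hmax : IsMaxOn f s x) (hmin : IsMinOn f s y) :
    eVariationOn f s = ENNReal.ofReal (f x - f y) := by
  rw [← eVariationOn.comp_ofDual]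
  exact hf.dual_left.eVariationOn_eq_of_isMinOn_of_isMaxOn hy hx hmin hmax

end Variation

theorem indicator_const_mem_Icc {α : Type*} (s : Set α) {c : ℝ} (hc : 0 ≤ c) (x : α) :
    s.indicator (fun _ => c) x ∈ Icc 0 c := by
  by_cases hx : x ∈ s <;> simp [hx, hc]

theorem eVariationOn_indicator_Ici_const (a : ℝ) {c : ℝ} (hc : 0 ≤ c) :
    eVariationOn ((Ici a).indicator fun _ => c) univ = ENNReal.ofReal c := by
  have hmono : Monotone ((Ici a).indicator fun _ => c) := fun x y hxy => by
    simp only [indicator_apply, mem_Ici]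
    split_ifs <;> linarith
  have hbounds := indicator_const_mem_Icc (Ici a) hc
  simpa using (hmono.monotoneOn univ).eVariationOn_eq_of_isMinOn_of_isMaxOn (x := a - 1) (y := a)
    (mem_univ _) (mem_univ _) (fun z _ => by simpa using (hbounds z).1)
    (fun z _ => by simpa using (hbounds z).2)

theorem eVariationOn_indicator_Icc_const {a b : ℝ} (hab : a ≤ b) {c : ℝ} (hc : 0 ≤ c) :
    eVariationOn ((Icc a b).indicator fun _ => c) univ = 2 * ENNReal.ofReal c := by
  set F := (Icc a b).indicator fun _ => c
  have hbounds := indicator_const_mem_Icc (Icc a b) hc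
  have hleft : eVariationOn F (Iic a) = ENNReal.ofReal c := by
    have hmono : MonotoneOn F (Iic a) := fun x _ y hy hxy => by
      simp only [F, indicator_apply, mem_Icc]
      split_ifs <;> grind
    simpa [F, hab] using hmono.eVariationOn_eq_of_isMinOn_of_isMaxOn (x := a - 1) (y := a)
      (by simp) self_mem_Iic (fun z _ => by simpa [F] using (hbounds z).1)
      (fun z _ => by simpa [F, hab] using (hbounds z).2)
  have hright : eVariationOn F (Ici a) = ENNReal.ofReal c := by
    have hanti : AntitoneOn F (Ici a) := fun x hx y _ hxy => by
      simp only [F, indicator_apply, mem_Icc]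
      split_ifs <;> grind
    simpa [F, hab] using hanti.eVariationOn_eq_of_isMaxOn_of_isMinOn (x := a) (y := b + 1)
      self_mem_Ici (by simp; linarith) (fun z _ => by simpa [F, hab] using (hbounds z).2)
      (fun z _ => by simpa [F] using (hbounds z).1)
  rw [← Iic_union_Ici (a := a), eVariationOn.union F isGreatest_Iic isLeast_Ici, hleft, hright,
    two_mul]

section Couplings

variable {E : Type*} [MeasurableSpace E] {μ ν : Measure E} {γ : Measure (E × E)}

theorem measure_univ_of_mem_couplings (hγ : γ ∈ Couplings μ ν) : γ univ = μ univ := by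
  rw [← hγ.1, Measure.map_apply measurable_fst MeasurableSet.univ, preimage_univ]

theorem lintegral_add_of_mem_couplings (hγ : γ ∈ Couplings μ ν) {φ ψ : E → ℝ≥0∞}
    (hφ : Measurable φ) (hψ : Measurable ψ) :
    ∫⁻ p, φ p.1 + ψ p.2 ∂γ = ∫⁻ x, φ x ∂μ + ∫⁻ y, ψ y ∂ν := by
  rw [lintegral_add_left (f := fun p : E × E => φ p.1) (hφ.comp measurable_fst),
    ← lintegral_map hφ measurable_fst,
    ← lintegral_map hψ measurable_snd, hγ.1, hγ.2]

theorem ae_fst_of_mem_couplings (hγ : γ ∈ Couplings μ ν) {P : E → Prop} (hP : ∀ᵐ x ∂μ, P x) :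
    ∀ᵐ p ∂γ, P p.1 :=
  ae_of_ae_map measurable_fst.aemeasurable (hγ.1 ▸ hP)

theorem ae_snd_of_mem_couplings (hγ : γ ∈ Couplings μ ν) {P : E → Prop} (hP : ∀ᵐ y ∂ν, P y) :
    ∀ᵐ p ∂γ, P p.2 :=
  ae_of_ae_map measurable_snd.aemeasurable (hγ.2 ▸ hP)

theorem W2sq_le_W2sq_of_potentials [Dist E] {μ' : Measure E} (hμ : μ univ ≠ ∞)
    (hμ' : μ' univ = μ univ) {T : E → E} (hT : Measurable T) (hTμ : μ.map T = ν)
    {φ ψ : E → ℝ≥0∞} (hφ : Measurable φ) (hψ : Measurable ψ) {K : ℝ≥0∞} (hK : K ≠ ∞)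
    (htight : ∀ᵐ x ∂μ, ENNReal.ofReal (dist x (T x) ^ 2) + K ≤ φ x + ψ (T x))
    (hdual : ∀ γ ∈ Couplings μ' ν,
      ∀ᵐ p ∂γ, φ p.1 + ψ p.2 ≤ ENNReal.ofReal (dist p.1 p.2 ^ 2) + K)
    (hφμ : ∫⁻ x, φ x ∂μ ≤ ∫⁻ x, φ x ∂μ') :
    W2sq μ ν ≤ W2sq μ' ν := by
  have hgraph : μ.map (fun x => (x, T x)) ∈ Couplings μ ν := by
    constructor <;> rw [Measure.map_map (by fun_prop) (by fun_prop)]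
    · exact Measure.map_id
    · exact hTμ
  refine le_iInf₂ fun γ hγ => ?_
  rw [← ENNReal.add_le_add_iff_right (ENNReal.mul_ne_top hK hμ)]
  calc W2sq μ ν + K * μ univ
      ≤ ∫⁻ x, ENNReal.ofReal (dist x (T x) ^ 2) ∂μ + K * μ univ := by
        gcongr
        exact (iInf₂_le _ hgraph).trans (lintegral_map_le _ _)
    _ = ∫⁻ x, ENNReal.ofReal (dist x (T x) ^ 2) + K ∂μ := by
        rw [lintegral_add_right _ measurable_const, lintegral_const, mul_comm]
    _ ≤ ∫⁻ x, φ x + ψ (T x) ∂μ := lintegral_mono_ae htight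
    _ = ∫⁻ x, φ x ∂μ + ∫⁻ y, ψ y ∂ν := by
        rw [lintegral_add_left hφ, ← hTμ, lintegral_map hψ hT]
    _ ≤ ∫⁻ x, φ x ∂μ' + ∫⁻ y, ψ y ∂ν := by gcongr
    _ = ∫⁻ p, φ p.1 + ψ p.2 ∂γ := (lintegral_add_of_mem_couplings hγ hφ hψ).symm
    _ ≤ ∫⁻ p, ENNReal.ofReal (dist p.1 p.2 ^ 2) + K ∂γ := lintegral_mono_ae (hdual γ hγ)
    _ = ∫⁻ p, ENNReal.ofReal (dist p.1 p.2 ^ 2) ∂γ + K * μ univ := by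
        rw [lintegral_add_right _ measurable_const, lintegral_const,
          measure_univ_of_mem_couplings hγ, hμ', mul_comm]

end Couplings

theorem setLIntegral_le_lintegral_mul {α : Type*} [MeasurableSpace α] {μ : Measure α}
    {s : Set α} (hs : MeasurableSet s) (hμs : μ s ≠ ∞) {h Φ : α → ℝ≥0∞} (hh : Measurable h)
    (hΦ : Measurable Φ) {c : ℝ≥0∞} (hc : c ≠ ∞) (h_le : ∀ᵐ x ∂μ, h x ≤ 1)
    (h_mass : ∫⁻ x, h x ∂μ = μ s) (hΦs : ∀ x ∈ s, Φ x ≤ c)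
    (hΦsc : ∀ᵐ x ∂μ, x ∉ s → h x ≠ 0 → c ≤ Φ x) :
    ∫⁻ x in s, Φ x ∂μ ≤ ∫⁻ x, Φ x * h x ∂μ := by
  have hpoint : ∀ᵐ x ∂μ, s.indicator Φ x + c * h x ≤ Φ x * h x + s.indicator (fun _ => c) x := by
    filter_upwards [h_le, hΦsc] with x hx hxs
    by_cases hmem : x ∈ s
    · simp only [indicator_of_mem hmem]
      calc Φ x + c * h x = Φ x * h x + Φ x * (1 - h x) + c * h x := by
            rw [← mul_add, add_tsub_cancel_of_le hx, mul_one]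
        _ ≤ Φ x * h x + c * (1 - h x) + c * h x := by gcongr; exact hΦs x hmem
        _ = Φ x * h x + c := by rw [add_assoc, ← mul_add, tsub_add_cancel_of_le hx, mul_one]
    · simp only [indicator_of_notMem hmem, zero_add, add_zero]
      by_cases hx0 : h x = 0
      · simp [hx0]
      · exact mul_le_mul_left (hxs hmem hx0) _
  have hint := lintegral_mono_ae hpoint
  rwa [lintegral_add_left (hΦ.indicator hs), lintegral_indicator hs, lintegral_const_mul c hh,
    lintegral_add_left (f := fun x => Φ x * h x) (hΦ.mul hh), lintegral_indicator_const hs, h_mass,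
    ENNReal.add_le_add_iff_right (ENNReal.mul_ne_top hc hμs)] at hint

theorem withDensity_ofReal_indicator_const {α : Type*} [MeasurableSpace α] (μ : Measure α)
    {s : Set α} (hs : MeasurableSet s) (c : ℝ) :
    μ.withDensity (fun x => ENNReal.ofReal (s.indicator (fun _ => c) x))
      = ENNReal.ofReal c • μ.restrict s := by
  rw [← Function.comp_def ENNReal.ofReal, ← indicator_comp_of_zero ENNReal.ofReal_zero,
    withDensity_indicator hs, Function.comp_def, withDensity_const]

theorem Real.map_mul_add_volume_restrict_Icc {a : ℝ} (ha : 0 < a) (b x y : ℝ) :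
    (volume.restrict (Icc x y)).map (fun t => a * t + b)
      = ENNReal.ofReal a⁻¹ • volume.restrict (Icc (a * x + b) (a * y + b)) := by
  have hpre : (fun t => a * t + b) ⁻¹' Icc (a * x + b) (a * y + b) = Icc x y := by
    ext t; simp [mul_le_mul_iff_right₀ ha]
  have hmap : volume.map (fun t => a * t + b) = ENNReal.ofReal a⁻¹ • (volume : Measure ℝ) := by
    rw [show (fun t => a * t + b) = (fun t => t + b) ∘ (fun t => a * t) from rfl,
      ← Measure.map_map (by fun_prop) (by fun_prop),
      Real.map_volume_mul_left ha.ne', Measure.map_smul, map_add_right_eq_self,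
      abs_of_pos (inv_pos.2 ha)]
  rw [← hpre, ← Measure.restrict_map (by fun_prop) measurableSet_Icc, hmap,
    Measure.restrict_smul]

def dualPotentialFst (N x : ℝ) : ℝ := (1 - N) * min x 1 ^ 2 + 2 * N * min x 1

def dualPotentialSnd (N y : ℝ) : ℝ := (1 - N⁻¹) * y ^ 2 - 2 * y

theorem continuous_dualPotentialFst (N : ℝ) : Continuous (dualPotentialFst N) := by
  unfold dualPotentialFst; fun_prop

theorem continuous_dualPotentialSnd (N : ℝ) : Continuous (dualPotentialSnd N) := by
  unfold dualPotentialSnd; fun_prop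

theorem dualPotentialFst_nonneg {N x : ℝ} (hN : 1 ≤ N) (hx : 0 ≤ x) : 0 ≤ dualPotentialFst N x := by
  have hm0 : 0 ≤ min x 1 := le_min hx zero_le_one
  have hm1 : min x 1 ≤ 1 := min_le_right x 1
  unfold dualPotentialFst
  nlinarith [mul_nonneg hm0 (mul_nonneg (sub_nonneg.2 hN) (sub_nonneg.2 hm1))]

theorem dualPotentialSnd_nonneg {N y : ℝ} (hN : 1 ≤ N) (hy : y ≤ 0) : 0 ≤ dualPotentialSnd N y := by
  have : N⁻¹ ≤ 1 := inv_le_one_of_one_le₀ hN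
  unfold dualPotentialSnd
  nlinarith [sq_nonneg y]

theorem dualPotentialFst_le {N : ℝ} (hN : 1 ≤ N) (x : ℝ) : dualPotentialFst N x ≤ 1 + N := by
  have hm1 : 0 ≤ 1 - min x 1 := sub_nonneg.2 (min_le_right x 1)
  unfold dualPotentialFst
  nlinarith [mul_nonneg hm1 (mul_nonneg (sub_nonneg.2 hN) hm1)]

theorem dualPotentialFst_of_one_le (N : ℝ) {x : ℝ} (hx : 1 ≤ x) : dualPotentialFst N x = 1 + N := by
  rw [dualPotentialFst, min_eq_right hx]; ring

theorem dualPotentialFst_add_dualPotentialSnd_le {N x y : ℝ} (hN : 0 < N) (hx : 0 ≤ x)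
    (hy : y ≤ 0) : dualPotentialFst N x + dualPotentialSnd N y ≤ (x - y) ^ 2 + N := by
  set m := min x 1
  have hm : (m - y) ^ 2 ≤ (x - y) ^ 2 :=
    pow_le_pow_left₀ (by linarith [le_min hx zero_le_one]) (by linarith [min_le_left x 1]) 2
  have hgap : (m - y) ^ 2 + N - (dualPotentialFst N x + dualPotentialSnd N y)
      = (N * m - y - N) ^ 2 / N := by
    unfold dualPotentialFst dualPotentialSnd
    field_simp
    ring
  linarith [div_nonneg (sq_nonneg (N * m - y - N)) hN.le]

theorem dualPotentialFst_add_dualPotentialSnd_eq {N x : ℝ} (hN : N ≠ 0) (hx : x ≤ 1) :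
    dualPotentialFst N x + dualPotentialSnd N (N * x + -N) = (x - (N * x + -N)) ^ 2 + N := by
  rw [dualPotentialFst, dualPotentialSnd, min_eq_left hx]
  field_simp
  ring

theorem setLIntegral_Icc_dualPotentialFst_le {N : ℝ} (hN : 1 ≤ N) {h : ℝ → ℝ≥0∞}
    (hh : Measurable h) (h_le : ∀ᵐ x, h x ≤ 1) (h_supp : ∀ᵐ x, h x ≠ 0 → 0 ≤ x)
    (h_mass : ∫⁻ x, h x = 1) :
    ∫⁻ x in Icc 0 1, ENNReal.ofReal (dualPotentialFst N x)
      ≤ ∫⁻ x, ENNReal.ofReal (dualPotentialFst N x) ∂volume.withDensity h := by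
  have hΦ : Measurable fun x => ENNReal.ofReal (dualPotentialFst N x) :=
    (continuous_dualPotentialFst N).measurable.ennreal_ofReal
  rw [lintegral_withDensity_eq_lintegral_mul _ hh hΦ]
  simp only [Pi.mul_apply, mul_comm (h _)]
  refine setLIntegral_le_lintegral_mul measurableSet_Icc (by simp) hh hΦ ENNReal.ofReal_ne_top
    h_le (by simpa using h_mass) (fun x _ => ENNReal.ofReal_le_ofReal (dualPotentialFst_le hN x))
    (h_supp.mono fun x hx hxs hx0 => ?_)
  rw [dualPotentialFst_of_one_le N (not_lt.1 fun hx1 => hxs ⟨hx hx0, hx1.le⟩)]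

theorem W2sq_volume_restrict_Icc_le_of_memKf {N : ℝ} (hN : 1 ≤ N) {ρ' : ℝ → ℝ}
    (hρ' : Measurable ρ') (hK : MemKf ((Ici 0).indicator fun _ => 1) ρ') :
    W2sq (volume.restrict (Icc 0 1)) (ENNReal.ofReal (1 / N) • volume.restrict (Icc (-N) 0)) ≤
      W2sq (volume.withDensity fun x => ENNReal.ofReal (ρ' x))
        (ENNReal.ofReal (1 / N) • volume.restrict (Icc (-N) 0)) := by
  obtain ⟨-, hρ'le, hρ'mass⟩ := hK
  set h : ℝ → ℝ≥0∞ := fun x => ENNReal.ofReal (ρ' x)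
  have hh : Measurable h := hρ'.ennreal_ofReal
  have h_le : ∀ᵐ x, h x ≤ 1 := hρ'le.mono fun x hx =>
    ENNReal.ofReal_le_one.2 (hx.trans (indicator_const_mem_Icc _ zero_le_one x).2)
  have h_supp : ∀ᵐ x, h x ≠ 0 → 0 ≤ x := hρ'le.mono fun x hx hx0 => by
    by_contra hneg
    rw [indicator_of_notMem (show x ∉ Ici (0 : ℝ) from hneg)] at hx
    exact hx0 (ENNReal.ofReal_eq_zero.2 hx)
  refine W2sq_le_W2sq_of_potentials (T := fun t => N * t + -N) (K := ENNReal.ofReal N) (by simp)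
    (by simp [withDensity_apply, hρ'mass]) (by fun_prop) ?_
    (continuous_dualPotentialFst N).measurable.ennreal_ofReal
    (continuous_dualPotentialSnd N).measurable.ennreal_ofReal ENNReal.ofReal_ne_top ?_ ?_
    (setLIntegral_Icc_dualPotentialFst_le hN hh h_le h_supp hρ'mass)
  · rw [Real.map_mul_add_volume_restrict_Icc (by linarith)]
    simp
  · refine ae_restrict_of_forall_mem measurableSet_Icc fun x hx => ?_
    rw [← ENNReal.ofReal_add (sq_nonneg _) (by linarith), Real.dist_eq, sq_abs,
      ← dualPotentialFst_add_dualPotentialSnd_eq (by linarith) hx.2]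
    exact ENNReal.ofReal_add_le
  · intro γ hγ
    have hfst : ∀ᵐ x ∂volume.withDensity h, 0 ≤ x := (ae_withDensity_iff hh).2 h_supp
    have hsnd : ∀ᵐ y ∂ENNReal.ofReal (1 / N) • volume.restrict (Icc (-N) 0), y ≤ 0 :=
      Measure.ae_smul_measure (ae_restrict_of_forall_mem measurableSet_Icc fun y hy => hy.2) _
    filter_upwards [ae_fst_of_mem_couplings hγ hfst, ae_snd_of_mem_couplings hγ hsnd]
      with p hp1 hp2
    rw [← ENNReal.ofReal_add (dualPotentialFst_nonneg hN hp1) (dualPotentialSnd_nonneg hN hp2),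
      ← ENNReal.ofReal_add (sq_nonneg _) (by linarith), Real.dist_eq, sq_abs]
    exact ENNReal.ofReal_le_ofReal
      (dualPotentialFst_add_dualPotentialSnd_le (by linarith) hp1 hp2)

theorem memKf_indicator_Icc_zero_one :
    MemKf ((Ici 0).indicator fun _ => 1) ((Icc 0 1).indicator fun _ => 1) := by
  refine ⟨ae_of_all _ fun x => (indicator_const_mem_Icc _ zero_le_one x).1,
    ae_of_all _ fun x => indicator_le_indicator_of_subset Icc_subset_Ici_self
      (fun _ => zero_le_one) x, ?_⟩
  rw [← setLIntegral_univ, ← withDensity_apply _ MeasurableSet.univ,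
    withDensity_ofReal_indicator_const _ measurableSet_Icc]
  simp

/-- Sharpness of the constant `2` in `TV(P_{K_f} g) ≤ TV(g) + 2·TV(f)`: on `ℝ`, with
`f = 𝟙_{[0,∞)}` and `g = (1/n)𝟙_{[-n,0]}`, the projection of `g` onto `K_f` is
`ρ = 𝟙_{[0,1]}`, with `TV(ρ) = 2`, `TV(f) = 1`, `TV(g) = 2/n`, so that
`TV(ρ) = TV(g) + 2·TV(f) - 2/n`. -/
theorem stmt_17 (n : ℕ) (hn : 1 ≤ n)
    (f g ρ : ℝ → ℝ)
    (hf : f = Set.indicator (Set.Ici (0 : ℝ)) (fun _ => (1 : ℝ)))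
    (hg : g = Set.indicator (Set.Icc (-(n : ℝ)) 0) (fun _ => (1 / (n : ℝ))))
    (hρ : ρ = Set.indicator (Set.Icc (0 : ℝ) 1) (fun _ => (1 : ℝ))) :
    MemKf f ρ ∧
    (∀ ρ' : ℝ → ℝ, Measurable ρ' → MemKf f ρ' →
      W2sq (volume.withDensity fun x => ENNReal.ofReal (ρ x))
          (volume.withDensity fun x => ENNReal.ofReal (g x)) ≤
        W2sq (volume.withDensity fun x => ENNReal.ofReal (ρ' x))
          (volume.withDensity fun x => ENNReal.ofReal (g x))) ∧
    eVariationOn ρ Set.univ = 2 ∧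
    eVariationOn f Set.univ = 1 ∧
    eVariationOn g Set.univ = 2 / (n : ℝ≥0∞) ∧
    eVariationOn ρ Set.univ =
      eVariationOn g Set.univ + 2 * eVariationOn f Set.univ - 2 / (n : ℝ≥0∞) := by
  have hN : (1 : ℝ) ≤ n := by exact_mod_cast hn
  have hTVρ : eVariationOn ρ univ = 2 := by
    rw [hρ, eVariationOn_indicator_Icc_const zero_le_one zero_le_one, ENNReal.ofReal_one, mul_one]
  have hTVf : eVariationOn f univ = 1 := by
    rw [hf, eVariationOn_indicator_Ici_const 0 zero_le_one, ENNReal.ofReal_one]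
  have hTVg : eVariationOn g univ = 2 / n := by
    rw [hg, eVariationOn_indicator_Icc_const (by linarith) (by positivity),
      ENNReal.ofReal_div_of_pos (by linarith), ENNReal.ofReal_one, ENNReal.ofReal_natCast,
      mul_one_div]
  subst hf hg hρ
  refine ⟨memKf_indicator_Icc_zero_one, fun ρ' hρ' hK => ?_, hTVρ, hTVf, hTVg, ?_⟩
  · rw [withDensity_ofReal_indicator_const _ measurableSet_Icc,
      withDensity_ofReal_indicator_const _ measurableSet_Icc, ENNReal.ofReal_one, one_smul]
    exact W2sq_volume_restrict_Icc_le_of_memKf hN hρ' hK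
  · rw [hTVρ, hTVf, hTVg, mul_one, ENNReal.add_sub_cancel_left
      (ENNReal.div_ne_top ENNReal.ofNat_ne_top (by simp; omega))]

end
end

section
/- Let ρ, g be smooth probability densities on a smooth bounded uniformly convex domain Ω ⊆ ℝ^d, bounded away from 0 and ∞, let (φ, ψ) be smooth Kantorovich potentials for the transport between them (so T = id − ∇φ with T_# ρ = g and I_d − D²φ ≥ 0), and let H ∈ C²(ℝ^d) be convex. Then at every point, the quantity E := div(∇H(∇φ)) − [div(∇H(∇φ) ∘ S)] ∘ T, where S = T⁻¹, equals −tr[D²H(∇φ) · (D²φ)² · (I_d − D²φ)^{-1}], and E ≤ 0. -/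
open MeasureTheory Matrix
open scoped RealInnerProductSpace ENNReal

noncomputable section

/-- The divergence of a vector field, as the trace of its derivative. -/
def divg {d : ℕ} (ξ : EuclideanSpace ℝ (Fin d) → EuclideanSpace ℝ (Fin d))
    (x : EuclideanSpace ℝ (Fin d)) : ℝ :=
  LinearMap.trace ℝ (EuclideanSpace ℝ (Fin d)) (fderiv ℝ ξ x).toLinearMap

namespace Stmt18Aux

variable {d : ℕ}
local notation "E" => EuclideanSpace ℝ (Fin d)

lemma contDiff_gradient {f : E → ℝ} (hf : ContDiff ℝ (⊤ : ℕ∞) f) :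
    ContDiff ℝ (⊤ : ℕ∞) (gradient f) := by
  have h : gradient f = fun x => (InnerProductSpace.toDual ℝ E).symm (fderiv ℝ f x) := rfl
  rw [h]
  exact ((InnerProductSpace.toDual ℝ E).symm.contDiff).comp (hf.fderiv_right (by simp))

lemma inner_fderiv_gradient (f : E → ℝ) (x u v : E) :
    ⟪fderiv ℝ (gradient f) x u, v⟫ = fderiv ℝ (fderiv ℝ f) x u v := by
  have h : gradient f =
      (InnerProductSpace.toDual ℝ E).symm.toContinuousLinearEquiv ∘ (fderiv ℝ f) := rfl
  rw [h, ContinuousLinearEquiv.comp_fderiv]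
  simp [InnerProductSpace.toDual_symm_apply]

lemma fderiv_gradient_symm {f : E → ℝ} (hf : ContDiff ℝ (⊤ : ℕ∞) f) (x u v : E) :
    ⟪fderiv ℝ (gradient f) x u, v⟫ = ⟪u, fderiv ℝ (gradient f) x v⟫ := by
  rw [inner_fderiv_gradient, real_inner_comm, inner_fderiv_gradient]
  exact second_derivative_symmetric
    (fun y => (hf.differentiable (by simp) y).hasFDerivAt)
    (((hf.fderiv_right (m := 1) (WithTop.coe_le_coe.mpr le_top)).differentiable one_ne_zero x).hasFDerivAt) u v

lemma hessian_psd {H : E → ℝ} (hH : ContDiff ℝ (⊤ : ℕ∞) H) (hc : ConvexOn ℝ Set.univ H)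
    (y v : E) : 0 ≤ ⟪fderiv ℝ (gradient H) y v, v⟫ := by
  set c : ℝ → E := fun t => y + t • v with hc_def
  have hcder : ∀ t : ℝ, HasDerivAt c v t := by
    intro t
    simpa [hc_def] using ((hasDerivAt_id t).smul_const v).const_add y
  set q : ℝ → ℝ := fun t => H (c t) with hq_def
  have hqconv : ConvexOn ℝ Set.univ q := by
    have := hc.comp_affineMap (AffineMap.lineMap y (y + v) : ℝ →ᵃ[ℝ] E)
    simp only [Set.preimage_univ] at this
    convert this using 1
    rotate_left 4
    funext t
    simp [hq_def, hc_def, AffineMap.lineMap_apply, add_comm]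
    all_goals rfl
  have hq' : ∀ t, HasDerivAt q (⟪gradient H (c t), v⟫) t := by
    intro t
    have h1 : HasDerivAt q (fderiv ℝ H (c t) v) t :=
      (hH.differentiable (by simp) (c t)).hasFDerivAt.comp_hasDerivAt t (hcder t)
    have h2 : fderiv ℝ H (c t) v = ⟪gradient H (c t), v⟫ := by
      rw [gradient]
      exact (InnerProductSpace.toDual_symm_apply).symm
    rwa [h2] at h1
  have hmono : Monotone (deriv q) := by
    have := hqconv.monotoneOn_deriv (fun t _ => (hq' t).differentiableAt)
    rw [← monotoneOn_univ]; exact this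
  have hderivq : deriv q = fun t => ⟪gradient H (c t), v⟫ := funext fun t => (hq' t).deriv
  have hgc : HasDerivAt (fun t => gradient H (c t)) (fderiv ℝ (gradient H) y v) 0 := by
    have hd : HasFDerivAt (gradient H) (fderiv ℝ (gradient H) (c 0)) (c 0) :=
      (((contDiff_gradient hH).differentiable (by simp)) (c 0)).hasFDerivAt
    have := hd.comp_hasDerivAt 0 (hcder 0)
    simpa [hc_def, Function.comp_def] using this
  have hr : HasDerivAt (deriv q) (⟪fderiv ℝ (gradient H) y v, v⟫) 0 := by
    rw [hderivq]
    simpa using hgc.inner ℝ (hasDerivAt_const (0:ℝ) v)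
  have htend := hasDerivAt_iff_tendsto_slope.mp hr
  have h2 : Filter.Tendsto (slope (deriv q) 0) (nhdsWithin 0 (Set.Ioi 0))
      (nhds (⟪fderiv ℝ (gradient H) y v, v⟫)) :=
    htend.mono_left (nhdsWithin_mono 0 (fun t ht => ne_of_gt ht))
  refine ge_of_tendsto h2 ?_
  filter_upwards [self_mem_nhdsWithin] with t ht
  have : deriv q 0 ≤ deriv q t := hmono (le_of_lt ht)
  rw [slope_def_field]
  exact div_nonneg (by linarith) (by simpa using le_of_lt ht)

lemma posSemidef_toMatrix {f : E →L[ℝ] E}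
    (hsym : ∀ u v : E, ⟪f u, v⟫ = ⟪u, f v⟫) (hpos : ∀ v : E, 0 ≤ ⟪f v, v⟫) :
    Matrix.PosSemidef (LinearMap.toMatrix (EuclideanSpace.basisFun (Fin d) ℝ).toBasis
      (EuclideanSpace.basisFun (Fin d) ℝ).toBasis (f : E →ₗ[ℝ] E)) := by
  set Mx := LinearMap.toMatrix (EuclideanSpace.basisFun (Fin d) ℝ).toBasis
    (EuclideanSpace.basisFun (Fin d) ℝ).toBasis (f : E →ₗ[ℝ] E) with hMx
  have hM : Matrix.toEuclideanLin Mx = (f : E →ₗ[ℝ] E) := by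
    rw [hMx]
    rw [show (Matrix.toEuclideanLin : Matrix (Fin d) (Fin d) ℝ ≃ₗ[ℝ] _) =
      Matrix.toLin (EuclideanSpace.basisFun (Fin d) ℝ).toBasis
        (EuclideanSpace.basisFun (Fin d) ℝ).toBasis from Matrix.toEuclideanLin_eq_toLin_orthonormal]
    rw [Matrix.toLin_toMatrix]
  refine Matrix.PosSemidef.of_dotProduct_mulVec_nonneg ?_ ?_
  · rw [Matrix.isHermitian_iff_isSymmetric]
    intro u v
    rw [hM]
    exact hsym u v
  · intro x
    have h1 : star x ⬝ᵥ Mx *ᵥ x =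
        ⟪(WithLp.equiv 2 (Fin d → ℝ)).symm x, f ((WithLp.equiv 2 (Fin d → ℝ)).symm x)⟫ := by
      rw [dotProduct_comm]
      change _ = ⟪_, (f : E →ₗ[ℝ] E) _⟫
      rw [← hM]
      rfl
    rw [h1, real_inner_comm]
    exact hpos _

lemma matrix_trace_mul_nonneg {n : Type*} [Fintype n] [DecidableEq n]
    {P Q : Matrix n n ℝ} (hP : P.PosSemidef) (hQ : Q.PosSemidef) : 0 ≤ (P * Q).trace := by
  obtain ⟨B, hB⟩ : ∃ B : Matrix n n ℝ, Q = star B * B := by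
    open scoped MatrixOrder in exact CStarAlgebra.nonneg_iff_eq_star_mul_self.mp hQ.nonneg
  have h2 : (P * Q).trace = (B * P * Bᴴ).trace := by
    rw [hB, Matrix.star_eq_conjTranspose, ← mul_assoc, Matrix.trace_mul_cycle]
  rw [h2]
  exact (hP.mul_mul_conjTranspose_same B).trace_nonneg

/-- Trace of the composition of two "positive semidefinite" continuous linear maps on
Euclidean space is nonnegative. -/
lemma trace_comp_nonneg {f g : E →L[ℝ] E}
    (hfsym : ∀ u v : E, ⟪f u, v⟫ = ⟪u, f v⟫) (hfpos : ∀ v : E, 0 ≤ ⟪f v, v⟫)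
    (hgsym : ∀ u v : E, ⟪g u, v⟫ = ⟪u, g v⟫) (hgpos : ∀ v : E, 0 ≤ ⟪g v, v⟫) :
    0 ≤ LinearMap.trace ℝ E (f.comp g).toLinearMap := by
  rw [LinearMap.trace_eq_matrix_trace ℝ (EuclideanSpace.basisFun (Fin d) ℝ).toBasis]
  rw [ContinuousLinearMap.toLinearMap_comp,
    LinearMap.toMatrix_comp _ (EuclideanSpace.basisFun (Fin d) ℝ).toBasis _]
  exact matrix_trace_mul_nonneg (posSemidef_toMatrix hfsym hfpos) (posSemidef_toMatrix hgsym hgpos)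

end Stmt18Aux

open Stmt18Aux in
/-- Pointwise identity and sign for the key quantity in the main inequality:
for smooth Kantorovich potentials `φ` for the transport of `ρ` onto `g` (with
`T = id - ∇φ`, `S = T⁻¹`, `I - D²φ ≥ 0`) and convex `H`, the quantity
`E = div(∇H(∇φ)) - [div(∇H(∇φ) ∘ S)] ∘ T` equals
`-tr[D²H(∇φ)·(D²φ)²·(I - D²φ)⁻¹]` and is nonpositive. -/
theorem stmt_18 (d : ℕ) (Ω : Set (EuclideanSpace ℝ (Fin d)))
    (hΩo : IsOpen Ω) (hΩb : Bornology.IsBounded Ω) (hΩc : Convex ℝ Ω)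
    (ρ g φ H : EuclideanSpace ℝ (Fin d) → ℝ)
    (S T : EuclideanSpace ℝ (Fin d) → EuclideanSpace ℝ (Fin d))
    (hρ : ContDiff ℝ (⊤ : ℕ∞) ρ) (hg : ContDiff ℝ (⊤ : ℕ∞) g)
    (hbound : ∃ ε > (0:ℝ), ∀ x ∈ Ω, ε ≤ ρ x ∧ ρ x ≤ 1/ε ∧ ε ≤ g x ∧ g x ≤ 1/ε)
    (hprobρ : ∫⁻ x in Ω, ENNReal.ofReal (ρ x) = 1)
    (hprobg : ∫⁻ x in Ω, ENNReal.ofReal (g x) = 1)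
    (hφ : ContDiff ℝ (⊤ : ℕ∞) φ) (hH : ContDiff ℝ (⊤ : ℕ∞) H) (hHconv : ConvexOn ℝ Set.univ H)
    (hT : ∀ x, T x = x - gradient φ x)
    (hpush : ((volume.restrict Ω).withDensity fun x => ENNReal.ofReal (ρ x)).map T =
      (volume.restrict Ω).withDensity fun x => ENNReal.ofReal (g x))
    (hS : ContDiff ℝ (⊤ : ℕ∞) S) (hST : ∀ x ∈ Ω, S (T x) = x) (hTS : ∀ x ∈ Ω, T (S x) = x)
    (hpsd : ∀ x ∈ Ω, ∀ v : EuclideanSpace ℝ (Fin d),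
      ⟪(fderiv ℝ (gradient φ) x) v, v⟫ ≤ ⟪v, v⟫)
    (hinv : ∀ x ∈ Ω, IsUnit ((1 : EuclideanSpace ℝ (Fin d) →L[ℝ] EuclideanSpace ℝ (Fin d)) -
      fderiv ℝ (gradient φ) x)) :
    ∀ x ∈ Ω,
      divg (fun y => gradient H (gradient φ y)) x -
          divg ((fun y => gradient H (gradient φ y)) ∘ S) (T x) =
        - LinearMap.trace ℝ (EuclideanSpace ℝ (Fin d))
            (((fderiv ℝ (gradient H) (gradient φ x)).comp
              ((fderiv ℝ (gradient φ) x).comp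
                ((fderiv ℝ (gradient φ) x).comp
                  (Ring.inverse
                    ((1 : EuclideanSpace ℝ (Fin d) →L[ℝ] EuclideanSpace ℝ (Fin d)) -
                      fderiv ℝ (gradient φ) x))))).toLinearMap) ∧
      divg (fun y => gradient H (gradient φ y)) x -
          divg ((fun y => gradient H (gradient φ y)) ∘ S) (T x) ≤ 0 := by
  intro x hx
  set A : EuclideanSpace ℝ (Fin d) →L[ℝ] EuclideanSpace ℝ (Fin d) := fderiv ℝ (gradient φ) x with hA_def
  set M : EuclideanSpace ℝ (Fin d) →L[ℝ] EuclideanSpace ℝ (Fin d) := fderiv ℝ (gradient H) (gradient φ x) with hM_def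
  set B : EuclideanSpace ℝ (Fin d) →L[ℝ] EuclideanSpace ℝ (Fin d) := Ring.inverse ((1 : EuclideanSpace ℝ (Fin d) →L[ℝ] EuclideanSpace ℝ (Fin d)) - A) with hB_def
  have hu : IsUnit ((1 : EuclideanSpace ℝ (Fin d) →L[ℝ] EuclideanSpace ℝ (Fin d)) - A) := hinv x hx
  have h1 : ((1 : EuclideanSpace ℝ (Fin d) →L[ℝ] EuclideanSpace ℝ (Fin d)) - A) * B = 1 := Ring.mul_inverse_cancel _ hu
  have h2 : B * ((1 : EuclideanSpace ℝ (Fin d) →L[ℝ] EuclideanSpace ℝ (Fin d)) - A) = 1 := Ring.inverse_mul_cancel _ hu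
  -- differentiability
  have hgφ : ContDiff ℝ (⊤ : ℕ∞) (gradient φ) := contDiff_gradient hφ
  have hgH : ContDiff ℝ (⊤ : ℕ∞) (gradient H) := contDiff_gradient hH
  have hdgφ : Differentiable ℝ (gradient φ) := hgφ.differentiable (by simp)
  have hdgH : Differentiable ℝ (gradient H) := hgH.differentiable (by simp)
  have hdS : Differentiable ℝ S := hS.differentiable (by simp)
  have hTfun : T = fun y => y - gradient φ y := funext hT
  have hdT : Differentiable ℝ T := by
    rw [hTfun]; exact differentiable_id.sub hdgφ
  have hfT : fderiv ℝ T x = (1 : EuclideanSpace ℝ (Fin d) →L[ℝ] EuclideanSpace ℝ (Fin d)) - A := by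
    rw [hTfun, fderiv_fun_sub differentiableAt_fun_id (hdgφ x), fderiv_id']
    rw [ContinuousLinearMap.one_def]
  -- derivative of ξ
  have hfξ : ∀ y, fderiv ℝ (fun z => gradient H (gradient φ z)) y =
      (fderiv ℝ (gradient H) (gradient φ y)).comp (fderiv ℝ (gradient φ) y) := by
    intro y
    exact fderiv_comp y (hdgH (gradient φ y)) (hdgφ y)
  -- derivative of S at T x
  have hSB : fderiv ℝ S (T x) = B := by
    have heq : (fun y => S (T y)) =ᶠ[nhds x] (fun y => y) :=
      Filter.eventuallyEq_of_mem (hΩo.mem_nhds hx) (fun y hy => hST y hy)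
    have hA1 : fderiv ℝ (fun y => S (T y)) x = fderiv ℝ (fun y : EuclideanSpace ℝ (Fin d) => y) x := heq.fderiv_eq
    have hA2 : fderiv ℝ (fun y => S (T y)) x = (fderiv ℝ S (T x)).comp (fderiv ℝ T x) :=
      fderiv_comp x (hdS (T x)) (hdT x)
    have h3 : (fderiv ℝ S (T x)) * ((1 : EuclideanSpace ℝ (Fin d) →L[ℝ] EuclideanSpace ℝ (Fin d)) - A) = 1 := by
      rw [← hfT]
      rw [show (fderiv ℝ S (T x)) * (fderiv ℝ T x) = (fderiv ℝ S (T x)).comp (fderiv ℝ T x)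
        from rfl]
      rw [← hA2, hA1, fderiv_id', ContinuousLinearMap.one_def]
    calc fderiv ℝ S (T x) = fderiv ℝ S (T x) * (((1 : EuclideanSpace ℝ (Fin d) →L[ℝ] EuclideanSpace ℝ (Fin d)) - A) * B) := by
          rw [h1, mul_one]
      _ = (fderiv ℝ S (T x) * ((1 : EuclideanSpace ℝ (Fin d) →L[ℝ] EuclideanSpace ℝ (Fin d)) - A)) * B := by rw [mul_assoc]
      _ = B := by rw [h3, one_mul]
  -- the two divergences
  have hL1 : divg (fun y => gradient H (gradient φ y)) x =
      LinearMap.trace ℝ (EuclideanSpace ℝ (Fin d)) (M.comp A).toLinearMap := by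
    rw [divg, hfξ x]
  have hL2 : divg ((fun y => gradient H (gradient φ y)) ∘ S) (T x) =
      LinearMap.trace ℝ (EuclideanSpace ℝ (Fin d)) ((M.comp A).comp B).toLinearMap := by
    rw [divg]
    have hcomp : fderiv ℝ ((fun y => gradient H (gradient φ y)) ∘ S) (T x) =
        (fderiv ℝ (fun y => gradient H (gradient φ y)) (S (T x))).comp (fderiv ℝ S (T x)) :=
      fderiv_comp (T x) ((hdgH _).comp _ (hdgφ _)) (hdS (T x))
    rw [hcomp, hST x hx, hSB, hfξ x]
  -- key algebraic identity
  have hAB : A * B = B - 1 := by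
    have h1' : B - A * B = 1 := by
      have := h1; rwa [sub_mul, one_mul] at this
    rw [← h1']; abel
  have hz : (1 : EuclideanSpace ℝ (Fin d) →L[ℝ] EuclideanSpace ℝ (Fin d)) - B + A * B = 0 := by
    have h1' : B - A * B = 1 := by
      have := h1; rwa [sub_mul, one_mul] at this
    rw [← h1']; abel
  have hop : M.comp A - (M.comp A).comp B = -(M.comp (A.comp (A.comp B))) := by
    show M * A - (M * A) * B = -(M * (A * (A * B)))
    have hsum : (M * A - (M * A) * B) + M * (A * (A * B)) = 0 := by
      have h4 : A * ((1 : EuclideanSpace ℝ (Fin d) →L[ℝ] EuclideanSpace ℝ (Fin d)) - B + A * B) = A - A * B + A * (A * B) := by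
        rw [mul_add, mul_sub, mul_one]
      have h5 : M * (A * ((1 : EuclideanSpace ℝ (Fin d) →L[ℝ] EuclideanSpace ℝ (Fin d)) - B + A * B)) =
          M * A - (M * A) * B + M * (A * (A * B)) := by
        rw [h4, mul_add, mul_sub, ← mul_assoc]
      rw [← h5, hz, mul_zero, mul_zero]
    exact eq_neg_of_add_eq_zero_left hsum
  have htraceq : divg (fun y => gradient H (gradient φ y)) x -
      divg ((fun y => gradient H (gradient φ y)) ∘ S) (T x) =
      - LinearMap.trace ℝ (EuclideanSpace ℝ (Fin d)) (M.comp (A.comp (A.comp B))).toLinearMap := by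
    rw [hL1, hL2, ← map_sub, ← ContinuousLinearMap.coe_sub, hop,
      ContinuousLinearMap.coe_neg, map_neg]
  -- positivity data
  have hAsym : ∀ u v : EuclideanSpace ℝ (Fin d), ⟪A u, v⟫ = ⟪u, A v⟫ := fun u v => fderiv_gradient_symm hφ x u v
  have hMsym : ∀ u v : EuclideanSpace ℝ (Fin d), ⟪M u, v⟫ = ⟪u, M v⟫ := fun u v =>
    fderiv_gradient_symm hH (gradient φ x) u v
  have hMpos : ∀ v : EuclideanSpace ℝ (Fin d), 0 ≤ ⟪M v, v⟫ := fun v => hessian_psd hH hHconv (gradient φ x) v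
  have h1Asym : ∀ u v : EuclideanSpace ℝ (Fin d), ⟪((1 : EuclideanSpace ℝ (Fin d) →L[ℝ] EuclideanSpace ℝ (Fin d)) - A) u, v⟫ = ⟪u, ((1 : EuclideanSpace ℝ (Fin d) →L[ℝ] EuclideanSpace ℝ (Fin d)) - A) v⟫ := by
    intro u v
    simp only [ContinuousLinearMap.sub_apply, ContinuousLinearMap.one_apply,
      inner_sub_left, inner_sub_right, hAsym u v]
  have hBapply : ∀ w : EuclideanSpace ℝ (Fin d), ((1 : EuclideanSpace ℝ (Fin d) →L[ℝ] EuclideanSpace ℝ (Fin d)) - A) (B w) = w := by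
    intro w
    have := congrArg (fun L : EuclideanSpace ℝ (Fin d) →L[ℝ] EuclideanSpace ℝ (Fin d) => L w) h1
    simpa [ContinuousLinearMap.mul_apply] using this
  have hBsym : ∀ u v : EuclideanSpace ℝ (Fin d), ⟪B u, v⟫ = ⟪u, B v⟫ := by
    intro u v
    conv_lhs => rw [← hBapply v]
    rw [← h1Asym, hBapply]
  have hBpos : ∀ v : EuclideanSpace ℝ (Fin d), 0 ≤ ⟪B v, v⟫ := by
    intro v
    have hrw : ⟪B v, v⟫ = ⟪B v, ((1 : EuclideanSpace ℝ (Fin d) →L[ℝ] EuclideanSpace ℝ (Fin d)) - A) (B v)⟫ := by rw [hBapply]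
    have hw := hpsd x hx (B v)
    rw [← hA_def] at hw
    rw [hrw]
    simp only [ContinuousLinearMap.sub_apply, ContinuousLinearMap.one_apply, inner_sub_right]
    have hcm : ⟪B v, A (B v)⟫ = ⟪A (B v), B v⟫ := real_inner_comm _ _
    rw [hcm]
    linarith [hw]
  have hABcomm : A * B = B * A := by
    have hcomm : ((1 : EuclideanSpace ℝ (Fin d) →L[ℝ] EuclideanSpace ℝ (Fin d)) - A) * A = A * ((1 : EuclideanSpace ℝ (Fin d) →L[ℝ] EuclideanSpace ℝ (Fin d)) - A) := by
      rw [sub_mul, one_mul, mul_sub, mul_one]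
    calc A * B = 1 * (A * B) := by rw [one_mul]
      _ = (B * ((1 : EuclideanSpace ℝ (Fin d) →L[ℝ] EuclideanSpace ℝ (Fin d)) - A)) * (A * B) := by rw [h2]
      _ = B * ((((1 : EuclideanSpace ℝ (Fin d) →L[ℝ] EuclideanSpace ℝ (Fin d)) - A) * A) * B) := by
          rw [mul_assoc B ((1 : EuclideanSpace ℝ (Fin d) →L[ℝ] EuclideanSpace ℝ (Fin d)) - A) (A * B), ← mul_assoc ((1 : EuclideanSpace ℝ (Fin d) →L[ℝ] EuclideanSpace ℝ (Fin d)) - A) A B]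
      _ = B * ((A * ((1 : EuclideanSpace ℝ (Fin d) →L[ℝ] EuclideanSpace ℝ (Fin d)) - A)) * B) := by rw [hcomm]
      _ = (B * A) * (((1 : EuclideanSpace ℝ (Fin d) →L[ℝ] EuclideanSpace ℝ (Fin d)) - A) * B) := by
          rw [mul_assoc A ((1 : EuclideanSpace ℝ (Fin d) →L[ℝ] EuclideanSpace ℝ (Fin d)) - A) B, ← mul_assoc B A (((1 : EuclideanSpace ℝ (Fin d) →L[ℝ] EuclideanSpace ℝ (Fin d)) - A) * B)]
      _ = B * A := by rw [h1, mul_one]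
  have hABapply : ∀ w : EuclideanSpace ℝ (Fin d), A (B w) = B (A w) := by
    intro w
    have := congrArg (fun L : EuclideanSpace ℝ (Fin d) →L[ℝ] EuclideanSpace ℝ (Fin d) => L w) hABcomm
    simpa [ContinuousLinearMap.mul_apply] using this
  set G : EuclideanSpace ℝ (Fin d) →L[ℝ] EuclideanSpace ℝ (Fin d) := A.comp (A.comp B) with hG_def
  have hGapply : ∀ w : EuclideanSpace ℝ (Fin d), G w = A (A (B w)) := fun w => rfl
  have hGsym : ∀ u v : EuclideanSpace ℝ (Fin d), ⟪G u, v⟫ = ⟪u, G v⟫ := by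
    intro u v
    rw [hGapply, hGapply]
    calc ⟪A (A (B u)), v⟫ = ⟪A (B u), A v⟫ := hAsym _ _
      _ = ⟪B (A u), A v⟫ := by rw [hABapply]
      _ = ⟪A u, B (A v)⟫ := hBsym _ _
      _ = ⟪A u, A (B v)⟫ := by rw [hABapply]
      _ = ⟪u, A (A (B v))⟫ := hAsym _ _
  have hGpos : ∀ v : EuclideanSpace ℝ (Fin d), 0 ≤ ⟪G v, v⟫ := by
    intro v
    rw [hGapply]
    calc (0:ℝ) ≤ ⟪B (A v), A v⟫ := hBpos (A v)
      _ = ⟪A (B v), A v⟫ := by rw [hABapply]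
      _ = ⟪A (A (B v)), v⟫ := (hAsym _ _).symm
  have hkey : 0 ≤ LinearMap.trace ℝ (EuclideanSpace ℝ (Fin d)) (M.comp G).toLinearMap :=
    trace_comp_nonneg hMsym hMpos hGsym hGpos
  refine ⟨htraceq, ?_⟩
  rw [htraceq]
  exact neg_nonpos.mpr hkey

end
end
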